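/- Let ρ ≥ 1 be an integer and let (a_1, b_1), …, (a_k, b_k) be pairs of integers with a_n ≤ b_n ≤ a_n + ρ − 1 for every n, with a_1 < a_2 < ⋯ < a_k and b_1 < b_2 < ⋯ < b_k. For each n let S_n = {w ∈ ℤ : w ≤ a_n and b_n ≤ w + ρ − 1}. Then the cardinality of S_1 ∪ ⋯ ∪ S_k equals (ρ − (b_1 − a_1)) + Σ_{n=2}^{k} ( ρ − (b_n − a_n) − max(0, 1 + a_{n−1} − (1 + b_n − ρ)) ). -/
import Mathlib

private lemma ncard_Icc_int (x y : ℤ) : ((Set.Icc x y).ncard : ℤ) = max 0 (y + 1 - x) := by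
  rw [← Finset.coe_Icc, Set.ncard_coe_finset, Int.card_Icc]
  omega

private lemma ncard_Ioc_int (x y : ℤ) : ((Set.Ioc x y).ncard : ℤ) = max 0 (y - x) := by
  rw [← Finset.coe_Ioc, Set.ncard_coe_finset, Int.card_Ioc]
  omega

private lemma key (ρ : ℤ) (hρ : 1 ≤ ρ) (a b : ℕ → ℤ) :
    ∀ k, 1 ≤ k →
    (∀ n, 1 ≤ n → n ≤ k → a n ≤ b n ∧ b n ≤ a n + ρ - 1) →
    (∀ n, 1 ≤ n → n < k → a n < a (n + 1)) →
    (∀ n, 1 ≤ n → n < k → b n < b (n + 1)) →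
    (⋃ n ∈ Finset.Icc 1 k, Set.Icc (b n - ρ + 1) (a n)).Finite ∧
    (⋃ n ∈ Finset.Icc 1 k, Set.Icc (b n - ρ + 1) (a n)) ⊆ Set.Iic (a k) ∧
    ((⋃ n ∈ Finset.Icc 1 k, Set.Icc (b n - ρ + 1) (a n)).ncard : ℤ) =
      (ρ - (b 1 - a 1)) +
        ∑ n ∈ Finset.Icc 2 k,
          (ρ - (b n - a n) - max 0 (1 + a (n - 1) - (1 + b n - ρ))) := by
  intro k hk1
  induction k, hk1 using Nat.le_induction with
  | base =>
    intro hab _ _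
    have h1 := hab 1 le_rfl le_rfl
    simp only [Finset.Icc_self, Finset.mem_singleton, Set.iUnion_iUnion_eq_left]
    refine ⟨Set.finite_Icc _ _, ?_, ?_⟩
    · exact fun w hw => hw.2
    · rw [show Finset.Icc 2 1 = ∅ by rfl, Finset.sum_empty, ncard_Icc_int]
      omega
  | succ k hk ih =>
    intro hab ha hb
    obtain ⟨hfin, hsub, hcard⟩ := ih
      (fun n h1 h2 => hab n h1 (h2.trans (Nat.le_succ k)))
      (fun n h1 h2 => ha n h1 (h2.trans (Nat.lt_succ_self k)))
      (fun n h1 h2 => hb n h1 (h2.trans (Nat.lt_succ_self k)))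
    have hsplit : (⋃ n ∈ Finset.Icc 1 (k + 1), Set.Icc (b n - ρ + 1) (a n)) =
        (⋃ n ∈ Finset.Icc 1 k, Set.Icc (b n - ρ + 1) (a n)) ∪
          Set.Icc (b (k + 1) - ρ + 1) (a (k + 1)) := by
      rw [← Finset.insert_Icc_right_eq_Icc_add_one (by omega), Finset.set_biUnion_insert,
        Set.union_comm]
    have hak : a k < a (k + 1) := ha k hk (Nat.lt_succ_self k)
    have hbk : b k < b (k + 1) := hb k hk (Nat.lt_succ_self k)
    have habk := hab (k + 1) (by omega) le_rfl
    have habk' := hab k hk (Nat.le_succ k)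
    -- the new part
    have hdiff : Set.Icc (b (k + 1) - ρ + 1) (a (k + 1)) \
        (⋃ n ∈ Finset.Icc 1 k, Set.Icc (b n - ρ + 1) (a n)) =
        Set.Ioc (max (a k) (b (k + 1) - ρ)) (a (k + 1)) := by
      ext w
      simp only [Set.mem_diff, Set.mem_Icc, Set.mem_Ioc, max_lt_iff]
      constructor
      · rintro ⟨⟨hw1, hw2⟩, hw3⟩
        refine ⟨⟨?_, by omega⟩, hw2⟩
        by_contra h
        push_neg at h
        apply hw3
        refine Set.mem_biUnion (Finset.mem_Icc.mpr ⟨hk, le_rfl⟩) ?_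
        simp only [Set.mem_Icc]
        omega
      · rintro ⟨⟨hw1, hw2⟩, hw3⟩
        refine ⟨⟨by omega, hw3⟩, fun hmem => ?_⟩
        exact absurd (hsub hmem) (by simpa using hw1)
    have hunion : (⋃ n ∈ Finset.Icc 1 (k + 1), Set.Icc (b n - ρ + 1) (a n)) =
        (⋃ n ∈ Finset.Icc 1 k, Set.Icc (b n - ρ + 1) (a n)) ∪
          Set.Ioc (max (a k) (b (k + 1) - ρ)) (a (k + 1)) := by
      rw [hsplit, ← hdiff, Set.union_diff_self]
    refine ⟨?_, ?_, ?_⟩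
    · rw [hsplit]; exact hfin.union (Set.finite_Icc _ _)
    · rw [hsplit]
      rintro w (hw | hw)
      · exact le_trans (hsub hw) (le_of_lt hak)
      · exact hw.2
    · rw [hunion, Set.ncard_union_eq ?disj hfin (Set.finite_Ioc _ _)]
      case disj =>
        rw [Set.disjoint_left]
        intro w hw hw2
        have := hsub hw
        simp only [Set.mem_Ioc, max_lt_iff, Set.mem_Iic] at hw2 this
        omega
      push_cast
      rw [hcard, ncard_Ioc_int,
        Finset.sum_Icc_succ_top (by omega : 2 ≤ k + 1)]
      have : ρ - (b (k + 1) - a (k + 1)) -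
          max 0 (1 + a (k + 1 - 1) - (1 + b (k + 1) - ρ)) =
          max 0 (a (k + 1) - max (a k) (b (k + 1) - ρ)) := by
        simp only [Nat.add_sub_cancel]
        omega
      rw [this]
      ring

/-- the counting identity at the core of the correctness of the
`Support` algorithm. Given `ρ ≥ 1` and pairs `(a n, b n)` (`n = 1, …, k`) with
`a n ≤ b n ≤ a n + ρ - 1`, `a` and `b` strictly increasing, the number of
integers `w` lying in at least one of the sets
`S n = {w : w ≤ a n ∧ b n ≤ w + ρ - 1}` equals
`(ρ - (b 1 - a 1)) + ∑_{n=2}^{k} (ρ - (b n - a n) - max 0 (1 + a (n-1) - (1 + b n - ρ)))`. -/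
theorem support_counting_identity (ρ : ℤ) (hρ : 1 ≤ ρ) (k : ℕ) (hk : 1 ≤ k)
    (a b : ℕ → ℤ)
    (hab : ∀ n, 1 ≤ n → n ≤ k → a n ≤ b n ∧ b n ≤ a n + ρ - 1)
    (ha : ∀ n, 1 ≤ n → n < k → a n < a (n + 1))
    (hb : ∀ n, 1 ≤ n → n < k → b n < b (n + 1)) :
    ((⋃ n ∈ Finset.Icc 1 k, {w : ℤ | w ≤ a n ∧ b n ≤ w + ρ - 1}).ncard : ℤ) =
      (ρ - (b 1 - a 1)) +
        ∑ n ∈ Finset.Icc 2 k,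
          (ρ - (b n - a n) - max 0 (1 + a (n - 1) - (1 + b n - ρ))) := by
  have hsets : ∀ n : ℕ, {w : ℤ | w ≤ a n ∧ b n ≤ w + ρ - 1} =
      Set.Icc (b n - ρ + 1) (a n) := by
    intro n; ext w; simp only [Set.mem_setOf_eq, Set.mem_Icc]; omega
  simp only [hsets]
  exact (key ρ hρ a b k hk hab ha hb).2.2
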